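/- Let N ≥ 4 and m ∈ ℕ. Define the differential operators on functions of x ∈ [0,1]: (Δ_[0] y)(x) = x y''(x) + (5/2) y'(x), and (Δ_[1] y)(x) = (1-x) y''(x) - (N/2) y'(x) (i.e. Δ_[1] = z d²/dz² + (N/2) d/dz in the variable z = 1-x). Then there exists a constant C > 0 such that for every y ∈ C^∞([0,1]) whose support is contained in [1/6, 5/6], one has ‖Δ_[0]^m y‖_{L^∞([0,1])} ≤ C Σ_{k=0}^{m} ‖Δ_[1]^k y‖_{L^∞([0,1])}. -/

import Mathlib

/-!
Both operators have affine coefficients, and differentiating `(a + b x) y'' + c y'` `j` times gives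
`(a + b x) y^{(j+2)} + (c + j b) y^{(j+1)}`. On the support `[1/6, 5/6]` the leading coefficient
`1 - x` of `Δ_[1]` is at least `1/6`, so this identity for `Δ_[1]` bounds `w^{(j+2)}` by
`(Δ_[1] w)^{(j)}` and `w^{(j+1)}`; inductively `w^{(n)}` is controlled by the `Δ_[1]^k w` with
`k ≤ ⌈n/2⌉ = (n + 1) / 2`. The first derivative is recovered from `Δ_[1] w` through the integrating
factor `(1 - x)^{N/2}` and `w'(0) = 0`. The same identity for `Δ_[0]` expresses `(Δ_[0]^m y)^{(n)}`
through derivatives of `y` of order at most `2m + n`.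
-/

open Real Set Filter Topology

/-- The model degenerate operator at `x = 0`: `Δ_[0] y = x y'' + (5/2) y'`. -/
noncomputable def Delta0 (y : ℝ → ℝ) : ℝ → ℝ := fun x =>
  x * deriv (deriv y) x + (5/2) * deriv y x

/-- The model degenerate operator at `x = 1`: `Δ_[1] y = (1-x) y'' - (N/2) y'`
(that is, `z y'' + (N/2) y'` in the variable `z = 1 - x`). -/
noncomputable def Delta1 (N : ℝ) (y : ℝ → ℝ) : ℝ → ℝ := fun x =>
  (1-x) * deriv (deriv y) x - (N/2) * deriv y x

open scoped ContDiff

noncomputable def affineCoeffOp (a b c : ℝ) (y : ℝ → ℝ) : ℝ → ℝ := fun x =>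
  (a + b * x) * deriv (deriv y) x + c * deriv y x

theorem Delta0_eq_affineCoeffOp : Delta0 = affineCoeffOp 0 1 (5/2) := by
  ext y x
  simp [Delta0, affineCoeffOp]

theorem Delta1_eq_affineCoeffOp (N : ℝ) : Delta1 N = affineCoeffOp 1 (-1) (-(N/2)) := by
  ext y x
  simp only [Delta1, affineCoeffOp]
  ring

section affineCoeffOp

variable {a b c : ℝ} {y : ℝ → ℝ}

theorem ContDiff.affineCoeffOp (hy : ContDiff ℝ ∞ y) : ContDiff ℝ ∞ (affineCoeffOp a b c y) := by
  have hy' : ContDiff ℝ ∞ (deriv y) := (contDiff_infty_iff_deriv.mp hy).2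
  have hy'' : ContDiff ℝ ∞ (deriv (deriv y)) := (contDiff_infty_iff_deriv.mp hy').2
  unfold _root_.affineCoeffOp
  fun_prop

theorem tsupport_affineCoeffOp_subset : tsupport (affineCoeffOp a b c y) ⊆ tsupport y := by
  have h' : tsupport (fun x => c * deriv y x) ⊆ tsupport y :=
    tsupport_mul_subset_right.trans tsupport_deriv_subset
  have h'' : tsupport (fun x => (a + b * x) * deriv (deriv y) x) ⊆ tsupport y :=
    tsupport_mul_subset_right.trans (tsupport_deriv_subset.trans tsupport_deriv_subset)
  exact (tsupport_add _ _).trans (union_subset h'' h')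

theorem iteratedDeriv_affineCoeffOp (hy : ContDiff ℝ ∞ y) (j : ℕ) :
    iteratedDeriv j (affineCoeffOp a b c y) =
      fun x => (a + b * x) * iteratedDeriv (j + 2) y x
        + (c + j * b) * iteratedDeriv (j + 1) y x := by
  have hD (n : ℕ) (x : ℝ) : HasDerivAt (iteratedDeriv n y) (iteratedDeriv (n + 1) y x) x := by
    rw [iteratedDeriv_succ]
    exact (hy.differentiable_iteratedDeriv n
      (by exact_mod_cast ENat.natCast_lt_top n) x).hasDerivAt
  induction j with
  | zero =>
    ext x
    simp [affineCoeffOp, iteratedDeriv_succ]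
  | succ j ih =>
    ext x
    have hlin : HasDerivAt (fun x : ℝ => a + b * x) b x := by
      simpa using ((hasDerivAt_id x).const_mul b).const_add a
    rw [iteratedDeriv_succ, ih]
    refine ((hlin.mul (hD (j + 2) x)).add ((hD (j + 1) x).const_mul (c + j * b))).deriv.trans ?_
    push_cast
    ring

end affineCoeffOp

theorem ContDiff.Delta0 {y : ℝ → ℝ} (hy : ContDiff ℝ ∞ y) : ContDiff ℝ ∞ (Delta0 y) :=
  Delta0_eq_affineCoeffOp ▸ hy.affineCoeffOp

theorem ContDiff.Delta1 {N : ℝ} {y : ℝ → ℝ} (hy : ContDiff ℝ ∞ y) : ContDiff ℝ ∞ (Delta1 N y) :=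
  Delta1_eq_affineCoeffOp N ▸ hy.affineCoeffOp

theorem tsupport_Delta1_subset (N : ℝ) (y : ℝ → ℝ) : tsupport (Delta1 N y) ⊆ tsupport y :=
  Delta1_eq_affineCoeffOp N ▸ tsupport_affineCoeffOp_subset

theorem iteratedDeriv_Delta0 {y : ℝ → ℝ} (hy : ContDiff ℝ ∞ y) (j : ℕ) :
    iteratedDeriv j (Delta0 y) =
      fun x => x * iteratedDeriv (j + 2) y x + (5/2 + j) * iteratedDeriv (j + 1) y x := by
  rw [Delta0_eq_affineCoeffOp, iteratedDeriv_affineCoeffOp hy]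
  simp

theorem iteratedDeriv_Delta1 (N : ℝ) {y : ℝ → ℝ} (hy : ContDiff ℝ ∞ y) (j : ℕ) :
    iteratedDeriv j (Delta1 N y) =
      fun x => (1 - x) * iteratedDeriv (j + 2) y x - (N/2 + j) * iteratedDeriv (j + 1) y x := by
  rw [Delta1_eq_affineCoeffOp, iteratedDeriv_affineCoeffOp hy]
  ext x
  ring

noncomputable def supNormUnitInterval (f : ℝ → ℝ) : ℝ := ⨆ x : Icc (0:ℝ) 1, |f x|

theorem supNormUnitInterval_nonneg (f : ℝ → ℝ) : 0 ≤ supNormUnitInterval f :=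
  Real.iSup_nonneg fun _ => abs_nonneg _

theorem abs_le_supNormUnitInterval {f : ℝ → ℝ} (hf : Continuous f) {x : ℝ}
    (hx : x ∈ Icc (0:ℝ) 1) : |f x| ≤ supNormUnitInterval f := by
  have hbdd :=
    (isCompact_Icc.image_of_continuousOn (hf.abs.continuousOn (s := Icc (0:ℝ) 1))).bddAbove
  rw [image_eq_range] at hbdd
  exact le_ciSup hbdd ⟨x, hx⟩

noncomputable def gradedNorm (N : ℝ) (M : ℕ) (w : ℝ → ℝ) : ℝ :=
  ∑ k ∈ Finset.range (M + 1), supNormUnitInterval ((Delta1 N)^[k] w)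

section gradedNorm

variable {N : ℝ} {w : ℝ → ℝ}

theorem gradedNorm_nonneg (M : ℕ) : 0 ≤ gradedNorm N M w :=
  Finset.sum_nonneg fun _ _ => supNormUnitInterval_nonneg _

theorem gradedNorm_mono {M M' : ℕ} (h : M ≤ M') : gradedNorm N M w ≤ gradedNorm N M' w :=
  Finset.sum_le_sum_of_subset_of_nonneg (Finset.range_subset_range.mpr (by omega))
    fun _ _ _ => supNormUnitInterval_nonneg _

theorem supNormUnitInterval_le_gradedNorm {k M : ℕ} (hk : k ≤ M) :
    supNormUnitInterval ((Delta1 N)^[k] w) ≤ gradedNorm N M w :=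
  Finset.single_le_sum (f := fun k => supNormUnitInterval ((Delta1 N)^[k] w))
    (fun _ _ => supNormUnitInterval_nonneg _)
    (Finset.mem_range.mpr (by omega))

theorem gradedNorm_Delta1_le (M : ℕ) : gradedNorm N M (Delta1 N w) ≤ gradedNorm N (M + 1) w := by
  rw [gradedNorm, gradedNorm, Finset.sum_range_succ' _ (M + 1)]
  simp only [← Function.iterate_succ_apply, Function.iterate_zero, id_eq]
  linarith [supNormUnitInterval_nonneg w]

end gradedNorm

section gradient

variable {N : ℝ} {w : ℝ → ℝ}

/-- `(1 - x)^{N/2}` is an integrating factor for `Δ_[1]`, seen as a first order operator on `w'`. -/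
theorem hasDerivAt_one_sub_rpow_mul_deriv (hw : ContDiff ℝ ∞ w) {t : ℝ} (ht : t < 1) :
    HasDerivAt (fun t => (1 - t) ^ (N/2) * deriv w t) ((1 - t) ^ (N/2 - 1) * Delta1 N w t) t := by
  have hpos : 0 < 1 - t := by linarith
  have hpow : HasDerivAt (fun t : ℝ => (1 - t) ^ (N/2)) (-(N/2 * (1 - t) ^ (N/2 - 1))) t := by
    simpa using ((hasDerivAt_id t).const_sub 1).rpow_const (p := N/2) (Or.inl hpos.ne')
  have hw' : HasDerivAt (deriv w) (deriv (deriv w) t) t :=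
    ((contDiff_infty_iff_deriv.mp hw).2.differentiable (by simp) t).hasDerivAt
  refine (hpow.mul hw').congr_deriv ?_
  rw [show (1 - t) ^ (N/2) = (1 - t) ^ (N/2 - 1) * (1 - t) by
    rw [← rpow_add_one hpos.ne', sub_add_cancel]]
  simp only [Delta1]
  ring

theorem one_sub_rpow_mul_abs_deriv_le (hN : 2 ≤ N) (hw : ContDiff ℝ ∞ w) (hw0 : deriv w 0 = 0)
    {x : ℝ} (hx : x ∈ Ico (0:ℝ) 1) :
    (1 - x) ^ (N/2) * |deriv w x| ≤ supNormUnitInterval (Delta1 N w) := by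
  have hmvt := norm_image_sub_le_of_norm_deriv_le_segment' (a := 0) (b := x)
    (f := fun t => (1 - t) ^ (N/2) * deriv w t) (C := supNormUnitInterval (Delta1 N w))
    (fun t ht =>
      (hasDerivAt_one_sub_rpow_mul_deriv hw (by linarith [ht.2, hx.2])).hasDerivWithinAt)
    (fun t ht => ?_) x ⟨hx.1, le_rfl⟩
  · have hS := supNormUnitInterval_nonneg (Delta1 N w)
    simp only [hw0, mul_zero, sub_zero, norm_mul, Real.norm_eq_abs,
      abs_of_nonneg (rpow_nonneg (by linarith [hx.2] : (0:ℝ) ≤ 1 - x) _)] at hmvt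
    nlinarith [hx.1, hx.2]
  · have h1t : 0 ≤ 1 - t := by linarith [ht.2, hx.2]
    rw [norm_mul, Real.norm_eq_abs, Real.norm_eq_abs, abs_of_nonneg (rpow_nonneg h1t _),
      ← one_mul (supNormUnitInterval _)]
    exact mul_le_mul (rpow_le_one h1t (by linarith [ht.1]) (by linarith))
      (abs_le_supNormUnitInterval hw.Delta1.continuous ⟨ht.1, by linarith [ht.2, hx.2]⟩)
      (abs_nonneg _) zero_le_one

end gradient

def IsGradedBounded (N : ℝ) (M : ℕ) (F : (ℝ → ℝ) → ℝ → ℝ) : Prop :=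
  ∃ C ≥ 0, ∀ w : ℝ → ℝ, ContDiff ℝ ∞ w → tsupport w ⊆ Icc (1/6) (5/6) →
    ∀ x ∈ Icc (0:ℝ) 1, |F w x| ≤ C * gradedNorm N M w

namespace IsGradedBounded

variable {N : ℝ} {M : ℕ} {F G : (ℝ → ℝ) → ℝ → ℝ}

theorem mono {M' : ℕ} (h : M ≤ M') (hF : IsGradedBounded N M F) : IsGradedBounded N M' F := by
  obtain ⟨C, hC, hF⟩ := hF
  exact ⟨C, hC, fun w hw hs x hx =>
    (hF w hw hs x hx).trans (mul_le_mul_of_nonneg_left (gradedNorm_mono h) hC)⟩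

theorem congr (hF : IsGradedBounded N M F) (h : ∀ w, ContDiff ℝ ∞ w → ∀ x, F w x = G w x) :
    IsGradedBounded N M G := by
  obtain ⟨C, hC, hF⟩ := hF
  exact ⟨C, hC, fun w hw hs x hx => h w hw x ▸ hF w hw hs x hx⟩

theorem add (hF : IsGradedBounded N M F) (hG : IsGradedBounded N M G) :
    IsGradedBounded N M fun w x => F w x + G w x := by
  obtain ⟨C, hC, hF⟩ := hF
  obtain ⟨D, hD, hG⟩ := hG
  refine ⟨C + D, add_nonneg hC hD, fun w hw hs x hx => ?_⟩
  calc |F w x + G w x| ≤ |F w x| + |G w x| := abs_add_le _ _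
    _ ≤ C * gradedNorm N M w + D * gradedNorm N M w :=
        add_le_add (hF w hw hs x hx) (hG w hw hs x hx)
    _ = (C + D) * gradedNorm N M w := by ring

theorem const_mul (a : ℝ) (hF : IsGradedBounded N M F) :
    IsGradedBounded N M fun w x => a * F w x := by
  obtain ⟨C, hC, hF⟩ := hF
  refine ⟨|a| * C, mul_nonneg (abs_nonneg a) hC, fun w hw hs x hx => ?_⟩
  rw [abs_mul, mul_assoc]
  exact mul_le_mul_of_nonneg_left (hF w hw hs x hx) (abs_nonneg a)

theorem id_mul (hF : IsGradedBounded N M F) : IsGradedBounded N M fun w x => x * F w x := by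
  obtain ⟨C, hC, hF⟩ := hF
  refine ⟨C, hC, fun w hw hs x hx => ?_⟩
  rw [abs_mul, abs_of_nonneg hx.1]
  exact (mul_le_of_le_one_left (abs_nonneg _) hx.2).trans (hF w hw hs x hx)

theorem comp_Delta1 (hF : IsGradedBounded N M F) :
    IsGradedBounded N (M + 1) fun w => F (Delta1 N w) := by
  obtain ⟨C, hC, hF⟩ := hF
  exact ⟨C, hC, fun w hw hs x hx =>
    (hF _ hw.Delta1 ((tsupport_Delta1_subset N w).trans hs) x hx).trans
      (mul_le_mul_of_nonneg_left (gradedNorm_Delta1_le M) hC)⟩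

theorem of_weighted (p : ℝ) (hp : 0 ≤ p) (hF : ∀ w, tsupport (F w) ⊆ tsupport w) {C : ℝ}
    (hC : 0 ≤ C) (h : ∀ w : ℝ → ℝ, ContDiff ℝ ∞ w → tsupport w ⊆ Icc (1/6) (5/6) →
      ∀ x ∈ Icc (0:ℝ) (5/6), (1 - x) ^ p * |F w x| ≤ C * gradedNorm N M w) :
    IsGradedBounded N M F := by
  have h6 : (0:ℝ) < 6 ^ p := rpow_pos_of_pos (by norm_num) p
  refine ⟨6 ^ p * C, mul_nonneg h6.le hC, fun w hw hs x hx => ?_⟩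
  by_cases hx56 : x ≤ 5/6
  · have hweight : 1 ≤ 6 ^ p * (1 - x) ^ p := by
      rw [← mul_rpow (by norm_num) (by linarith)]
      exact one_le_rpow (by linarith) hp
    calc |F w x| ≤ 6 ^ p * (1 - x) ^ p * |F w x| :=
          le_mul_of_one_le_left (abs_nonneg _) hweight
      _ = 6 ^ p * ((1 - x) ^ p * |F w x|) := by ring
      _ ≤ 6 ^ p * (C * gradedNorm N M w) :=
          mul_le_mul_of_nonneg_left (h w hw hs x ⟨hx.1, hx56⟩) h6.le
      _ = 6 ^ p * C * gradedNorm N M w := by ring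
  · rw [image_eq_zero_of_notMem_tsupport fun hmem => hx56 (hs (hF w hmem)).2, abs_zero]
    exact mul_nonneg (mul_nonneg h6.le hC) (gradedNorm_nonneg M)

end IsGradedBounded

theorem tsupport_iteratedDeriv_subset (n : ℕ) (f : ℝ → ℝ) :
    tsupport (iteratedDeriv n f) ⊆ tsupport f := by
  induction n with
  | zero => rw [iteratedDeriv_zero]
  | succ n ih => rw [iteratedDeriv_succ]; exact tsupport_deriv_subset.trans ih

section bounds

variable {N : ℝ}

theorem isGradedBounded_self : IsGradedBounded N 0 fun w => w :=
  ⟨1, zero_le_one, fun w hw _ x hx => by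
    simpa [gradedNorm] using abs_le_supNormUnitInterval hw.continuous hx⟩

theorem isGradedBounded_deriv (hN : 2 ≤ N) : IsGradedBounded N 1 deriv := by
  refine .of_weighted (N/2) (by linarith) (fun _ => tsupport_deriv_subset) zero_le_one
    fun w hw hs x hx => ?_
  have hw0 : deriv w 0 = 0 :=
    image_eq_zero_of_notMem_tsupport fun h => by
      have := (hs (tsupport_deriv_subset h)).1
      norm_num at this
  rw [one_mul]
  exact (one_sub_rpow_mul_abs_deriv_le hN hw hw0 ⟨hx.1, by linarith [hx.2]⟩).trans
    (supNormUnitInterval_le_gradedNorm (k := 1) le_rfl)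

theorem isGradedBounded_iteratedDeriv (hN : 2 ≤ N) (n : ℕ) :
    IsGradedBounded N ((n + 1) / 2) (iteratedDeriv n) := by
  induction n using Nat.strong_induction_on with
  | _ n ih =>
    match n, ih with
    | 0, _ => exact isGradedBounded_self.congr fun w _ x => by rw [iteratedDeriv_zero]
    | 1, _ => exact (isGradedBounded_deriv hN).congr fun w _ x => by rw [iteratedDeriv_one]
    | j + 2, ih =>
      have hweighted : IsGradedBounded N ((j + 3) / 2)
          fun w x => (1 - x) * iteratedDeriv (j + 2) w x := by
        refine (((ih j (by omega)).comp_Delta1.mono (by omega)).add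
          (((ih (j + 1) (by omega)).const_mul (N/2 + j)).mono (by omega))).congr
          fun w hw x => ?_
        rw [iteratedDeriv_Delta1 N hw]
        ring
      obtain ⟨C, hC, hbound⟩ := hweighted
      refine .of_weighted 1 zero_le_one (tsupport_iteratedDeriv_subset _) hC
        fun w hw hs x hx => ?_
      have := hbound w hw hs x ⟨hx.1, by linarith [hx.2]⟩
      rwa [rpow_one, ← abs_of_nonneg (by linarith [hx.2] : (0:ℝ) ≤ 1 - x), ← abs_mul]

theorem isGradedBounded_iteratedDeriv_iterate_Delta0 (hN : 2 ≤ N) (m n : ℕ) :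
    IsGradedBounded N (m + (n + 1) / 2) fun w => iteratedDeriv n (Delta0^[m] w) := by
  induction m generalizing n with
  | zero => simpa using isGradedBounded_iteratedDeriv hN n
  | succ m ih =>
    refine (((ih (n + 2)).id_mul.mono (by omega)).add
      (((ih (n + 1)).const_mul (5/2 + n)).mono (by omega))).congr fun w hw x => ?_
    have hsmooth : ContDiff ℝ ∞ (Delta0^[m] w) :=
      Function.Iterate.rec (fun y => ContDiff ℝ ∞ y) hw (fun _ => ContDiff.Delta0) m
    rw [Function.iterate_succ_apply', iteratedDeriv_Delta0 hsmooth]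

end bounds

theorem sup_norm_grading_comparison (N : ℝ) (hN : 4 ≤ N) (m : ℕ) :
    ∃ C > 0, ∀ y : ℝ → ℝ, ContDiff ℝ (⊤:ℕ∞) y →
      tsupport y ⊆ Icc (1/6) (5/6) →
      (⨆ x : Icc (0:ℝ) 1, |Delta0^[m] y x|)
        ≤ C * ∑ k ∈ Finset.range (m+1), ⨆ x : Icc (0:ℝ) 1, |(Delta1 N)^[k] y x| := by
  obtain ⟨C, hC, hbound⟩ := isGradedBounded_iteratedDeriv_iterate_Delta0 (N := N) (by linarith) m 0
  refine ⟨C + 1, by positivity, fun y hy hs => ?_⟩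
  have : Nonempty (Icc (0:ℝ) 1) := ⟨⟨0, left_mem_Icc.mpr zero_le_one⟩⟩
  refine ciSup_le fun x => ?_
  calc |Delta0^[m] y x| ≤ C * gradedNorm N m y := by
        simpa using hbound y hy hs x x.2
    _ ≤ (C + 1) * gradedNorm N m y :=
        mul_le_mul_of_nonneg_right (by linarith) (gradedNorm_nonneg m)
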